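/- arXiv:1905.03992 — 4 statements merged into one kernel-verified Lean document; each statement's English description precedes it below -/
import Mathlib

section
/- Let (mₙ) be an increasing sequence of positive reals with liminf_{n→∞} mₙ/n > 0, and let A ⊆ ℕ. If the lower (mₙ)-density of A is zero, i.e. liminf_{n→∞} |A ∩ [1,mₙ]|/n = 0, then the lower l;(mₙ)-Banach density of A is zero, i.e. liminf_{s→∞} liminf_{n→∞} |A ∩ [n+1, n+mₛ]|/s = 0. -/
/-!
If the lower Banach density were positive, some window count `|A ∩ (n, n + ⌊mₛ⌋]|` would be
eventually positive, so `A` would meet every interval `(n, n + L]` for a fixed `L`: `A` is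
syndetic. An interval of length `b` then contains more than `b / L - 1` elements of `A`, which
together with `liminf mₙ / n > 0` gives `A` positive lower `(mₙ)`-density. The one escape is
that this density tends to `+∞` (where the real `liminf` is `0` by convention); but the window
counts are comparable to the initial counts, so the inner liminfs then tend to `+∞` too and the
outer `liminf` is `0` as well.
-/

open Filter Set

namespace Real

variable {ι : Type*} {f : Filter ι} {u : ι → ℝ}

lemma liminf_nonneg (h : ∀ᶠ x in f, 0 ≤ u x) : 0 ≤ liminf u f := by
  by_cases hu : f.IsCoboundedUnder (· ≥ ·) u
  · exact le_liminf_of_le hu h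
  · rw [liminf_of_not_isCoboundedUnder hu]

lemma eventually_lt_of_lt_liminf_of_nonneg {b : ℝ} (hb : 0 ≤ b) (h : b < liminf u f) :
    ∀ᶠ x in f, b < u x := by
  by_cases hu : f.IsBoundedUnder (· ≥ ·) u
  · exact eventually_lt_of_lt_liminf h hu
  · rw [liminf_of_not_isBoundedUnder hu] at h
    exact absurd h hb.not_gt

lemma tendsto_atTop_of_not_isCoboundedUnder (hu : ¬f.IsCoboundedUnder (· ≥ ·) u) :
    Tendsto u f atTop :=
  tendsto_atTop.2 fun b => by
    by_contra hb
    exact hu (.of_frequently_le ((not_eventually.1 hb).mono fun _ h => (not_le.1 h).le))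

lemma le_liminf_or_tendsto_atTop {c : ℝ} (h : ∀ᶠ x in f, c ≤ u x) :
    c ≤ liminf u f ∨ Tendsto u f atTop := by
  by_cases hu : f.IsCoboundedUnder (· ≥ ·) u
  · exact .inl (le_liminf_of_le hu h)
  · exact .inr (tendsto_atTop_of_not_isCoboundedUnder hu)

lemma liminf_eq_zero_of_tendsto_atTop [f.NeBot] (h : Tendsto u f atTop) : liminf u f = 0 :=
  liminf_of_not_isCoboundedUnder fun ⟨b, hb⟩ => by
    linarith [hb (b + 1) (h.eventually_ge_atTop _)]

end Real

lemma setOf_mem_and_le_add_eq_inter_Ioc (A : Set ℕ) (n : ℕ) (x : ℝ) :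
    {k | k ∈ A ∧ n + 1 ≤ k ∧ (k : ℝ) ≤ n + x} = A ∩ Ioc n (n + ⌊x⌋₊) := by
  ext k
  simp only [mem_ofPred_eq, mem_inter_iff, mem_Ioc, Nat.succ_le_iff]
  refine and_congr_right fun _ => and_congr_right fun hnk => ?_
  rcases le_or_gt 0 x with hx | hx
  · rw [← Nat.le_floor_iff (by positivity), add_comm (n : ℝ), Nat.floor_add_natCast hx,
      add_comm ⌊x⌋₊]
  · have : (n : ℝ) < k := by exact_mod_cast hnk
    rw [Nat.floor_of_nonpos hx.le]
    constructor <;> intro h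
    · linarith
    · omega

lemma setOf_mem_and_le_eq_inter_Ioc (A : Set ℕ) (x : ℝ) :
    {k | k ∈ A ∧ 1 ≤ k ∧ (k : ℝ) ≤ x} = A ∩ Ioc 0 ⌊x⌋₊ := by
  simpa using setOf_mem_and_le_add_eq_inter_Ioc A 0 x

lemma ncard_inter_Ioc_le (A : Set ℕ) (a b : ℕ) : (A ∩ Ioc a b).ncard ≤ b - a :=
  (ncard_le_ncard inter_subset_right (finite_Ioc _ _)).trans (ncard_Ioc_nat a b).le

def IsSyndetic (A : Set ℕ) (L : ℕ) : Prop := ∀ n, (A ∩ Ioc n (n + L)).Nonempty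

namespace IsSyndetic

variable {A : Set ℕ} {L : ℕ}

lemma of_eventually {N : ℕ} (h : ∀ n ≥ N, (A ∩ Ioc n (n + L)).Nonempty) :
    IsSyndetic A (N + L) := fun n => by
  obtain ⟨k, hkA, hk⟩ := h (max n N) (le_max_right _ _)
  exact ⟨k, hkA, by simp only [mem_Ioc] at hk ⊢; omega⟩

lemma pos (hA : IsSyndetic A L) : 0 < L := by
  obtain ⟨k, -, hk⟩ := hA 0
  simp only [mem_Ioc] at hk
  omega

lemma le_ncard_inter_Ioc_mul (hA : IsSyndetic A L) (n t : ℕ) :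
    t ≤ (A ∩ Ioc n (n + t * L)).ncard := by
  induction t with
  | zero => exact Nat.zero_le _
  | succ t ih =>
    obtain ⟨k, hkA, hk⟩ := hA (n + t * L)
    have hsub : A ∩ Ioc n (n + t * L) ⊂ A ∩ Ioc n (n + (t + 1) * L) := by
      rw [add_one_mul, ← add_assoc]
      refine (ssubset_iff_of_subset (inter_subset_inter_right _ (Ioc_subset_Ioc_right
        le_self_add))).2 ⟨k, ⟨hkA, ?_, hk.2⟩, fun hk' => ?_⟩
      · exact le_self_add.trans_lt hk.1
      · exact absurd hk'.2.2 hk.1.not_ge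
    exact ih.trans_lt (ncard_lt_ncard hsub ((finite_Ioc _ _).inter_of_right A))

lemma lt_ncard_inter_Ioc_add_one_mul (hA : IsSyndetic A L) (n b : ℕ) :
    b < ((A ∩ Ioc n (n + b)).ncard + 1) * L := by
  have hsub : A ∩ Ioc n (n + b / L * L) ⊆ A ∩ Ioc n (n + b) :=
    inter_subset_inter_right _ (Ioc_subset_Ioc_right (by grw [Nat.div_mul_le_self]))
  calc b < b / L * L + L := Nat.lt_div_mul_add hA.pos
    _ ≤ (A ∩ Ioc n (n + b)).ncard * L + L := by
      grw [hA.le_ncard_inter_Ioc_mul n (b / L),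
        ncard_le_ncard hsub ((finite_Ioc _ _).inter_of_right A)]
    _ = _ := by ring

lemma lt_ncard_inter_Ioc_floor_add_one_mul (hA : IsSyndetic A L) (n : ℕ) (x : ℝ) :
    x < ((A ∩ Ioc n (n + ⌊x⌋₊)).ncard + 1) * L := by
  calc x < ⌊x⌋₊ + 1 := Nat.lt_floor_add_one x
    _ ≤ ((A ∩ Ioc n (n + ⌊x⌋₊)).ncard + 1) * L := by
      exact_mod_cast hA.lt_ncard_inter_Ioc_add_one_mul n ⌊x⌋₊

lemma exists_pos_eventually_le_ncard_div (hA : IsSyndetic A L) {m : ℕ → ℝ}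
    (hm : 0 < liminf (fun n : ℕ => m n / n) atTop) :
    ∃ c > 0, ∀ᶠ n : ℕ in atTop, c ≤ ((A ∩ Ioc 0 ⌊m n⌋₊).ncard : ℝ) / n := by
  set α := liminf (fun n : ℕ => m n / n) atTop / 2
  have hα : 0 < α := by positivity
  have hL : (0 : ℝ) < L := by exact_mod_cast hA.pos
  refine ⟨α / (2 * L), by positivity, ?_⟩
  filter_upwards [Real.eventually_lt_of_lt_liminf_of_nonneg (u := fun n : ℕ => m n / n) hα.le
      (half_lt_self hm),
    eventually_ge_atTop 1, (tendsto_natCast_atTop_atTop (R := ℝ)).eventually_ge_atTop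
      (2 * L / α)] with n hαn hn1 hnL
  have hn : (0 : ℝ) < n := by exact_mod_cast hn1
  have hcount := hA.lt_ncard_inter_Ioc_floor_add_one_mul 0 (m n)
  rw [lt_div_iff₀ hn] at hαn
  rw [div_le_iff₀ hα] at hnL
  rw [div_le_div_iff₀ (by positivity) hn]
  simp only [zero_add] at hcount
  linarith

lemma tendsto_liminf_ncard_div_atTop (hA : IsSyndetic A L) {m : ℕ → ℝ}
    (h : Tendsto (fun s : ℕ => ((A ∩ Ioc 0 ⌊m s⌋₊).ncard : ℝ) / s) atTop atTop) :
    Tendsto (fun s : ℕ =>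
      liminf (fun n : ℕ => ((A ∩ Ioc n (n + ⌊m s⌋₊)).ncard : ℝ) / s) atTop) atTop atTop := by
  have hL : (0 : ℝ) < L := by exact_mod_cast hA.pos
  refine tendsto_atTop_mono' atTop ?_ (tendsto_atTop_add_const_right _ (-1) (h.atTop_div_const hL))
  filter_upwards [eventually_ge_atTop 1] with s hs
  have hs : (1 : ℝ) ≤ s := by exact_mod_cast hs
  refine le_liminf_of_le (isCoboundedUnder_ge_of_le atTop (x := ⌊m s⌋₊ / s) fun n => ?_)
    (Eventually.of_forall fun n => ?_)
  · gcongr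
    simpa using ncard_inter_Ioc_le A n (n + ⌊m s⌋₊)
  · have hcompare : (A ∩ Ioc 0 ⌊m s⌋₊).ncard < ((A ∩ Ioc n (n + ⌊m s⌋₊)).ncard + 1) * L :=
      (ncard_inter_Ioc_le A 0 _).trans_lt (hA.lt_ncard_inter_Ioc_add_one_mul n _)
    have hcount : ((A ∩ Ioc 0 ⌊m s⌋₊).ncard : ℝ) / L - 1 ≤ (A ∩ Ioc n (n + ⌊m s⌋₊)).ncard := by
      rw [sub_le_iff_le_add, div_le_iff₀ hL]
      exact_mod_cast hcompare.le
    calc ((A ∩ Ioc 0 ⌊m s⌋₊).ncard : ℝ) / s / L + -1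
        ≤ ((A ∩ Ioc 0 ⌊m s⌋₊).ncard : ℝ) / L / s - 1 / s := by
          rw [div_right_comm, ← sub_eq_add_neg]
          gcongr
          exact div_le_one_of_le₀ hs (by positivity)
      _ = (((A ∩ Ioc 0 ⌊m s⌋₊).ncard : ℝ) / L - 1) / s := by rw [sub_div]
      _ ≤ _ := by gcongr

end IsSyndetic

lemma isSyndetic_of_liminf_pos {A : Set ℕ} {b s : ℕ}
    (h : 0 < liminf (fun n : ℕ => ((A ∩ Ioc n (n + b)).ncard : ℝ) / s) atTop) :
    ∃ L, IsSyndetic A L := by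
  obtain ⟨N, hN⟩ := eventually_atTop.1 (Real.eventually_lt_of_lt_liminf_of_nonneg le_rfl h)
  refine ⟨N + b, IsSyndetic.of_eventually fun n hn => ?_⟩
  refine (ncard_pos ((finite_Ioc _ _).inter_of_right A)).1 (Nat.pos_of_ne_zero fun h0 => ?_)
  simpa [h0] using hN n hn

theorem lower_density_zero_imp_lower_banach_density_zero_general
    (m : ℕ → ℝ)
    (hliminf : 0 < Filter.atTop.liminf (fun n : ℕ => m n / n))
    (A : Set ℕ)
    (hA : Filter.atTop.liminf
      (fun n : ℕ => (({k | k ∈ A ∧ 1 ≤ k ∧ (k : ℝ) ≤ m n}).ncard : ℝ) / n) = 0) :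
    Filter.atTop.liminf (fun s : ℕ =>
      Filter.atTop.liminf (fun n : ℕ =>
        (({k | k ∈ A ∧ n + 1 ≤ k ∧ (k : ℝ) ≤ (n : ℝ) + m s}).ncard : ℝ) / s)) = 0 := by
  simp only [setOf_mem_and_le_add_eq_inter_Ioc, setOf_mem_and_le_eq_inter_Ioc] at hA ⊢
  have hnonneg : 0 ≤ liminf (fun s : ℕ =>
      liminf (fun n : ℕ => ((A ∩ Ioc n (n + ⌊m s⌋₊)).ncard : ℝ) / s) atTop) atTop :=
    Real.liminf_nonneg <| .of_forall fun s => Real.liminf_nonneg <| .of_forall fun n => by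
      positivity
  refine (hnonneg.lt_or_eq.resolve_left fun hpos => ?_).symm
  obtain ⟨s, hs⟩ := (Real.eventually_lt_of_lt_liminf_of_nonneg le_rfl hpos).exists
  obtain ⟨L, hL⟩ := isSyndetic_of_liminf_pos hs
  obtain ⟨c, hc, hdensity⟩ := hL.exists_pos_eventually_le_ncard_div hliminf
  rcases Real.le_liminf_or_tendsto_atTop hdensity with hle | htop
  · linarith
  · linarith [Real.liminf_eq_zero_of_tendsto_atTop (hL.tendsto_liminf_ncard_div_atTop htop)]

/-- If the lower `(mₙ)`-density of `A ⊆ ℕ` is zero, then the lower `l;(mₙ)`-Banach density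
of `A` is zero, provided `(mₙ)` is increasing with `liminf mₙ/n > 0`. -/
theorem lower_density_zero_imp_lower_banach_density_zero
    (m : ℕ → ℝ) (hm : StrictMono m) (hm1 : ∀ n, 1 ≤ m n)
    (hliminf : 0 < Filter.atTop.liminf (fun n : ℕ => m n / n))
    (A : Set ℕ)
    (hA : Filter.atTop.liminf
      (fun n : ℕ => (({k | k ∈ A ∧ 1 ≤ k ∧ (k : ℝ) ≤ m n}).ncard : ℝ) / n) = 0) :
    Filter.atTop.liminf (fun s : ℕ =>
      Filter.atTop.liminf (fun n : ℕ =>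
        (({k | k ∈ A ∧ n + 1 ≤ k ∧ (k : ℝ) ≤ (n : ℝ) + m s}).ncard : ℝ) / s)) = 0 :=
  lower_density_zero_imp_lower_banach_density_zero_general m hliminf A hA
end

section
/- Let X = ℓ¹(ℕ), let ωₙ = 2n/(2n−1), and let T be the unilateral weighted backward shift T⟨xₙ⟩ = ⟨ωₙ xₙ₊₁⟩. Then T is absolutely Cesàro bounded: there exists a constant C > 0 such that (1/n) Σ_{l=1}^{n} ‖Tˡ x‖ ≤ C ‖x‖ for every x ∈ ℓ¹(ℕ) and every n ∈ ℕ. -/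
/-!
With `P m = ω₁ ⋯ ω_m`, the coefficient of `|x_m|` in `∑_{l ≤ n} ‖Tˡ x‖` is
`∑_{b ≤ a < m} P m / P a` with `b = m - min n m`. Since `2(a+1)/P(a+1) - 2a/P a = 1/P a`, this
sum telescopes to `2m - 2b · P m / P b ≤ 2(m - b) ≤ 2n`, because `P` is increasing. Hence
`C = 2` works, and the asymptotics `P m ∼ √(πm)` are never needed.
-/

open Finset
open scoped ENNReal

noncomputable def backwardShiftCoeff (w : ℕ → ℝ) (l m : ℕ) : ℝ :=
  if l ≤ m then ∏ j ∈ Ico (m - l) m, |w j| else 0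

section BackwardShift

variable {w : ℕ → ℝ}

lemma backwardShift_pow_apply {p : ℝ≥0∞} [Fact (1 ≤ p)]
    {T : lp (fun _ : ℕ => ℝ) p →L[ℝ] lp (fun _ : ℕ => ℝ) p}
    (hT : ∀ x n, T x n = w n * x (n + 1)) (l : ℕ) (x : lp (fun _ : ℕ => ℝ) p) (k : ℕ) :
    (T ^ l) x k = (∏ j ∈ Ico k (k + l), w j) * x (k + l) := by
  induction l generalizing x with
  | zero => simp
  | succ l ih =>
    rw [pow_succ, mul_apply_eq_comp, ih, hT, ← add_assoc,
      prod_Ico_succ_top (Nat.le_add_right k l), mul_assoc]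

variable {T : lp (fun _ : ℕ => ℝ) 1 →L[ℝ] lp (fun _ : ℕ => ℝ) 1}
  (hT : ∀ x n, T x n = w n * x (n + 1))
include hT

lemma hasSum_backwardShiftCoeff_mul_norm (l : ℕ) (x : lp (fun _ : ℕ => ℝ) 1) :
    HasSum (fun m => backwardShiftCoeff w l m * ‖x m‖) ‖(T ^ l) x‖ := by
  have hnorm : HasSum (fun k => ‖(T ^ l) x k‖) ‖(T ^ l) x‖ := by
    simpa using lp.hasSum_norm (p := 1) (by norm_num) ((T ^ l) x)
  have hlow : ∑ m ∈ range l, backwardShiftCoeff w l m * ‖x m‖ = 0 :=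
    sum_eq_zero fun m hm => by simp [backwardShiftCoeff, not_le.2 (mem_range.1 hm)]
  have hshift : (fun k => backwardShiftCoeff w l (k + l) * ‖x (k + l)‖)
      = fun k => ‖(T ^ l) x k‖ := by
    ext k
    rw [backwardShift_pow_apply hT, norm_mul, norm_prod, backwardShiftCoeff,
      if_pos (Nat.le_add_left l k), Nat.add_sub_cancel]
    rfl
  refine (hasSum_nat_add_iff' l).1 ?_
  rwa [hlow, sub_zero, hshift]

lemma sum_norm_pow_le_of_backwardShiftCoeff {s : Finset ℕ} {C : ℝ}
    (hC : ∀ m, ∑ l ∈ s, backwardShiftCoeff w l m ≤ C) (x : lp (fun _ : ℕ => ℝ) 1) :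
    ∑ l ∈ s, ‖(T ^ l) x‖ ≤ C * ‖x‖ := by
  have hx : HasSum (fun m => C * ‖x m‖) (C * ‖x‖) := by
    simpa using (lp.hasSum_norm (p := 1) (by norm_num) x).mul_left C
  refine hasSum_le (fun m => ?_)
    (hasSum_sum fun l _ => hasSum_backwardShiftCoeff_mul_norm hT l x) hx
  rw [← sum_mul]
  exact mul_le_mul_of_nonneg_right (hC m) (norm_nonneg _)

end BackwardShift

-- `shiftWeight n` is the paper's `ω_{n+1}`: here sequences are indexed from `0`.
noncomputable def shiftWeight (n : ℕ) : ℝ := 2 * ((n : ℝ) + 1) / (2 * ((n : ℝ) + 1) - 1)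

noncomputable def shiftWeightProd (m : ℕ) : ℝ := ∏ j ∈ range m, shiftWeight j

lemma shiftWeight_eq (n : ℕ) : shiftWeight n = (2 * n + 2) / (2 * n + 1) := by
  unfold shiftWeight; ring_nf

lemma shiftWeight_pos (n : ℕ) : 0 < shiftWeight n := by
  rw [shiftWeight_eq]; positivity

lemma one_le_shiftWeight (n : ℕ) : 1 ≤ shiftWeight n := by
  rw [shiftWeight_eq, one_le_div (by positivity)]; linarith

lemma shiftWeightProd_pos (m : ℕ) : 0 < shiftWeightProd m :=
  prod_pos fun j _ => shiftWeight_pos j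

lemma shiftWeightProd_succ (m : ℕ) :
    shiftWeightProd (m + 1) = shiftWeightProd m * shiftWeight m :=
  prod_range_succ _ _

lemma shiftWeightProd_mono : Monotone shiftWeightProd :=
  monotone_nat_of_le_succ fun m => by
    rw [shiftWeightProd_succ]
    exact le_mul_of_one_le_right (shiftWeightProd_pos m).le (one_le_shiftWeight m)

lemma prod_Ico_shiftWeight {a b : ℕ} (h : a ≤ b) :
    ∏ j ∈ Ico a b, shiftWeight j = shiftWeightProd b / shiftWeightProd a := by
  rw [eq_div_iff (shiftWeightProd_pos a).ne', mul_comm, shiftWeightProd, shiftWeightProd,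
    prod_range_mul_prod_Ico _ h]

lemma sub_div_shiftWeightProd_succ (m : ℕ) :
    2 * ((m + 1 : ℕ) : ℝ) / shiftWeightProd (m + 1) - 2 * m / shiftWeightProd m
      = (shiftWeightProd m)⁻¹ := by
  have hP := shiftWeightProd_pos m
  rw [shiftWeightProd_succ, shiftWeight_eq]
  field_simp
  push_cast
  ring

lemma sum_Ico_inv_shiftWeightProd {b k : ℕ} (h : b ≤ k) :
    ∑ a ∈ Ico b k, (shiftWeightProd a)⁻¹
      = 2 * k / shiftWeightProd k - 2 * b / shiftWeightProd b := by
  simp_rw [← sub_div_shiftWeightProd_succ]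
  exact sum_Ico_sub (fun a : ℕ => 2 * (a : ℝ) / shiftWeightProd a) h

lemma sum_Ico_shiftWeightProd_div_le {b k : ℕ} (h : b ≤ k) :
    ∑ a ∈ Ico b k, shiftWeightProd k / shiftWeightProd a ≤ 2 * ((k : ℝ) - b) := by
  have hk := shiftWeightProd_pos k
  have hb := shiftWeightProd_pos b
  have hratio : 1 ≤ shiftWeightProd k / shiftWeightProd b :=
    (one_le_div hb).2 (shiftWeightProd_mono h)
  calc ∑ a ∈ Ico b k, shiftWeightProd k / shiftWeightProd a
      = shiftWeightProd k * ∑ a ∈ Ico b k, (shiftWeightProd a)⁻¹ := by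
        simp_rw [mul_sum, div_eq_mul_inv]
    _ = 2 * k - 2 * b * (shiftWeightProd k / shiftWeightProd b) := by
        rw [sum_Ico_inv_shiftWeightProd h]
        field_simp
    _ ≤ 2 * ((k : ℝ) - b) := by nlinarith [(Nat.cast_nonneg b : (0 : ℝ) ≤ b)]

lemma backwardShiftCoeff_shiftWeight {l m : ℕ} (h : l ≤ m) :
    backwardShiftCoeff shiftWeight l m = shiftWeightProd m / shiftWeightProd (m - l) := by
  rw [backwardShiftCoeff, if_pos h, ← prod_Ico_shiftWeight (Nat.sub_le m l)]
  exact prod_congr rfl fun j _ => abs_of_pos (shiftWeight_pos j)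

lemma sum_Icc_backwardShiftCoeff_shiftWeight_le (n m : ℕ) :
    ∑ l ∈ Icc 1 n, backwardShiftCoeff shiftWeight l m ≤ 2 * n := by
  set k := min n m
  have hvanish : ∑ l ∈ Ico 1 (k + 1), backwardShiftCoeff shiftWeight l m
      = ∑ l ∈ Icc 1 n, backwardShiftCoeff shiftWeight l m := by
    refine sum_subset (fun l hl => ?_) fun l hl hl' => ?_
    · simp only [mem_Ico, mem_Icc] at hl ⊢; omega
    · simp only [mem_Ico, mem_Icc] at hl hl'
      rw [backwardShiftCoeff, if_neg (by omega)]
  have hreflect : ∑ l ∈ Ico 1 (k + 1), backwardShiftCoeff shiftWeight l m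
      = ∑ a ∈ Ico (m - k) m, shiftWeightProd m / shiftWeightProd a := by
    rw [sum_congr rfl fun l hl => backwardShiftCoeff_shiftWeight (by simp only [mem_Ico] at hl; omega),
      sum_Ico_reflect (fun a => shiftWeightProd m / shiftWeightProd a) 1 (by omega),
      Nat.add_sub_add_right, Nat.add_sub_cancel]
  have hkm : ((m - k : ℕ) : ℝ) = m - k := Nat.cast_sub (min_le_right n m)
  have hkn : (k : ℝ) ≤ n := by exact_mod_cast min_le_left n m
  calc ∑ l ∈ Icc 1 n, backwardShiftCoeff shiftWeight l m
      = ∑ a ∈ Ico (m - k) m, shiftWeightProd m / shiftWeightProd a := by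
        rw [← hvanish, hreflect]
    _ ≤ 2 * ((m : ℝ) - (m - k : ℕ)) := sum_Ico_shiftWeightProd_div_le (Nat.sub_le m k)
    _ ≤ 2 * n := by rw [hkm]; linarith

theorem backward_shift_absolutely_cesaro_bounded_general
    (T : lp (fun _ : ℕ => ℝ) 1 →L[ℝ] lp (fun _ : ℕ => ℝ) 1)
    (hT : ∀ (x : lp (fun _ : ℕ => ℝ) 1) (n : ℕ),
      (T x) n = ((2 * ((n : ℝ) + 1)) / (2 * ((n : ℝ) + 1) - 1)) * x (n + 1)) :
    ∃ C : ℝ, 0 < C ∧ ∀ (x : lp (fun _ : ℕ => ℝ) 1) (n : ℕ), 1 ≤ n →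
      (1 / (n : ℝ)) * ∑ l ∈ Finset.Icc 1 n, ‖(T ^ l) x‖ ≤ C * ‖x‖ := by
  refine ⟨2, two_pos, fun x n hn => ?_⟩
  have hsum : ∑ l ∈ Icc 1 n, ‖(T ^ l) x‖ ≤ 2 * n * ‖x‖ :=
    sum_norm_pow_le_of_backwardShiftCoeff (w := shiftWeight) hT
      (sum_Icc_backwardShiftCoeff_shiftWeight_le n) x
  have hn : (0 : ℝ) < n := by exact_mod_cast hn
  rw [one_div, inv_mul_le_iff₀ hn]
  linarith

/-- The weighted backward shift with weights `ωₙ = 2n/(2n−1)` on `ℓ¹(ℕ)` is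
absolutely Cesàro bounded. -/
theorem backward_shift_absolutely_cesaro_bounded [Fact ((1 : ℝ≥0∞) ≤ 1)]
    (T : lp (fun _ : ℕ => ℝ) 1 →L[ℝ] lp (fun _ : ℕ => ℝ) 1)
    (hT : ∀ (x : lp (fun _ : ℕ => ℝ) 1) (n : ℕ),
      (T x) n = ((2 * ((n : ℝ) + 1)) / (2 * ((n : ℝ) + 1) - 1)) * x (n + 1)) :
    ∃ C : ℝ, 0 < C ∧ ∀ (x : lp (fun _ : ℕ => ℝ) 1) (n : ℕ), 1 ≤ n →
      (1 / (n : ℝ)) * ∑ l ∈ Finset.Icc 1 n, ‖(T ^ l) x‖ ≤ C * ‖x‖ :=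
  backward_shift_absolutely_cesaro_bounded_general T hT
end

section
/- Let X be a Banach space, N ∈ ℕ, and T₁,…,T_N ∈ L(X). Suppose there exist a vector x ∈ X and two strictly increasing sequences (lₖ) and (sₖ) of positive integers such that Tⱼ^{sₖ} x → 0 and ‖Tⱼ^{lₖ} x‖ → ∞ for every j ∈ {1,…,N}. Then for every σ > 0 and M ∈ ℕ there exist infinitely many n ∈ ℕ such that the interval [n+1, n+M] is disjoint from ⋃_{j=1}^N {k ∈ ℕ : ‖Tⱼᵏ x‖ < σ}. -/
open Filter

lemma pow_apply_norm_le {X : Type*} [NormedAddCommGroup X] [NormedSpace ℝ X]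
    (f : X →L[ℝ] X) (m : ℕ) (y : X) : ‖(f ^ m) y‖ ≤ ‖f‖ ^ m * ‖y‖ := by
  induction m with
  | zero => simp
  | succ m ih =>
    have h1 : (f ^ (m + 1)) y = f ((f ^ m) y) := by
      rw [pow_succ']; rfl
    rw [h1, pow_succ]
    calc ‖f ((f ^ m) y)‖ ≤ ‖f‖ * ‖(f ^ m) y‖ := f.le_opNorm _
      _ ≤ ‖f‖ * (‖f‖ ^ m * ‖y‖) := by
          apply mul_le_mul_of_nonneg_left ih (norm_nonneg f)
      _ = ‖f‖ ^ m * ‖f‖ * ‖y‖ := by ring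

/-- If `Tⱼ^{sₖ}x → 0` and `‖Tⱼ^{lₖ}x‖ → ∞` for every `j`, then for every `σ > 0` and `M`,
there are infinitely many `n` such that `[n+1, n+M]` is disjoint from
`⋃ⱼ {k : ‖Tⱼᵏ x‖ < σ}`. -/
theorem far_intervals_avoiding_small_orbit {X : Type*} [NormedAddCommGroup X]
    [NormedSpace ℝ X] [CompleteSpace X]
    (N : ℕ) (hN : 0 < N) (T : Fin N → (X →L[ℝ] X)) (x : X)
    (l s : ℕ → ℕ) (hl : StrictMono l) (hs : StrictMono s)
    (hl1 : ∀ k, 1 ≤ l k) (hs1 : ∀ k, 1 ≤ s k)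
    (hzero : ∀ j, Tendsto (fun k => ((T j) ^ (s k)) x) atTop (nhds 0))
    (hinf : ∀ j, Tendsto (fun k => ‖((T j) ^ (l k)) x‖) atTop atTop) :
    ∀ σ : ℝ, 0 < σ → ∀ M : ℕ, 0 < M → ∀ n₀ : ℕ, ∃ n : ℕ, n₀ ≤ n ∧
      ∀ k : ℕ, n + 1 ≤ k → k ≤ n + M → ∀ j : Fin N, σ ≤ ‖((T j) ^ k) x‖ := by
  intro σ hσ M hM n₀
  set B : ℝ := 1 + ∑ j, ‖T j‖ with hB
  have hsum : (0 : ℝ) ≤ ∑ j, ‖T j‖ := Finset.sum_nonneg fun j _ => norm_nonneg _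
  have hB1 : (1 : ℝ) ≤ B := by simp [hB]; linarith
  have hBj : ∀ j, ‖T j‖ ≤ B := by
    intro j
    have : ‖T j‖ ≤ ∑ j, ‖T j‖ :=
      Finset.single_le_sum (fun j _ => norm_nonneg (T j)) (Finset.mem_univ j)
    linarith
  set C : ℝ := σ * B ^ M with hC
  have hall : ∀ᶠ k in atTop, ∀ j, C ≤ ‖((T j) ^ (l k)) x‖ :=
    eventually_all.2 fun j => (hinf j).eventually_ge_atTop C
  obtain ⟨K, hK⟩ := eventually_atTop.1 hall
  set k₀ : ℕ := max K (n₀ + M) with hk₀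
  have hlk : n₀ + M ≤ l k₀ := le_trans (le_max_right _ _) (hl.le_apply)
  refine ⟨l k₀ - M, by omega, ?_⟩
  intro k hk1 hk2 j
  have hkle : k ≤ l k₀ := by omega
  have hCk : C ≤ ‖((T j) ^ (l k₀)) x‖ := hK k₀ (le_max_left _ _) j
  obtain ⟨m, hm, hmM⟩ : ∃ m, l k₀ = m + k ∧ m ≤ M := ⟨l k₀ - k, by omega, by omega⟩
  have hsplit : ((T j) ^ (l k₀)) x = ((T j) ^ m) (((T j) ^ k) x) := by
    rw [hm, pow_add]; rfl
  have hbound : ‖((T j) ^ (l k₀)) x‖ ≤ B ^ M * ‖((T j) ^ k) x‖ := by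
    rw [hsplit]
    calc ‖((T j) ^ m) (((T j) ^ k) x)‖
        ≤ ‖T j‖ ^ m * ‖((T j) ^ k) x‖ := pow_apply_norm_le _ _ _
      _ ≤ B ^ m * ‖((T j) ^ k) x‖ := by
          apply mul_le_mul_of_nonneg_right _ (norm_nonneg _)
          exact pow_le_pow_left₀ (norm_nonneg _) (hBj j) _
      _ ≤ B ^ M * ‖((T j) ^ k) x‖ := by
          apply mul_le_mul_of_nonneg_right _ (norm_nonneg _)
          exact pow_le_pow_right₀ hB1 hmM
  have hBM : (0 : ℝ) < B ^ M := by positivity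
  have : σ * B ^ M ≤ ‖((T j) ^ k) x‖ * B ^ M := by
    calc σ * B ^ M = C := rfl
      _ ≤ ‖((T j) ^ (l k₀)) x‖ := hCk
      _ ≤ B ^ M * ‖((T j) ^ k) x‖ := hbound
      _ = ‖((T j) ^ k) x‖ * B ^ M := mul_comm _ _
  exact le_of_mul_le_mul_right this hBM
end

section
/- Let X be a Banach space, N ∈ ℕ, and T₁,…,T_N ∈ L(X). Suppose there exist x ∈ X and strictly increasing sequences (lₖ), (sₖ) of positive integers with Tⱼ^{sₖ}x → 0 and ‖Tⱼ^{lₖ}x‖ → ∞ for each j ∈ {1,…,N}. Then for every σ > 0 and ε > 0, both sets ⋃_{j=1}^N {k ∈ ℕ : ‖Tⱼᵏ x‖ < σ} and ⋃_{j=1}^N {k ∈ ℕ : ‖Tⱼᵏ x‖ ≥ ε} have lower Banach density zero, where the lower Banach density of A ⊆ ℕ is liminf_{s→∞} liminf_{n→∞} |A ∩ [n+1, n+s]| / s. -/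
/-!
Write `Mⱼ = max 1 ‖Tⱼ‖`. Along a window of length `S` the norms of the iterates `‖Tⱼᵏ x‖` change
by at most the factor `Mⱼ^S`. Hence a huge value at `k = lₖ` forces `‖Tⱼᵏ x‖ ≥ σ` on the whole
window ending at `lₖ`, and a tiny value at `k = sₖ` forces `‖Tⱼᵏ x‖ < ε` on the whole window
starting after `sₖ`. So each of the two sets misses windows of every length arbitrarily far out,
which makes every inner `liminf` in the lower Banach density vanish.
-/

open Filter Set

noncomputable def lowerBanachDensity (A : Set ℕ) : ℝ :=
  atTop.liminf fun S : ℕ => atTop.liminf fun n : ℕ => ((A ∩ Icc (n + 1) (n + S)).ncard : ℝ) / S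

lemma liminf_eq_zero_of_nonneg_of_frequently_eq_zero {ι : Type*} {l : Filter ι} {u : ι → ℝ}
    (h_nonneg : ∀ i, 0 ≤ u i) (h_zero : ∃ᶠ i in l, u i = 0) : l.liminf u = 0 := by
  have h_le : ∃ᶠ i in l, u i ≤ 0 := h_zero.mono fun _ hi => hi.le
  have h_bdd : IsBoundedUnder (· ≥ ·) l u := ⟨0, eventually_map.2 (.of_forall h_nonneg)⟩
  exact le_antisymm (liminf_le_of_frequently_le h_le h_bdd)
    (le_liminf_of_le (IsCoboundedUnder.of_frequently_le h_le) (.of_forall h_nonneg))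

lemma lowerBanachDensity_eq_zero_of_frequently_disjoint {A : Set ℕ}
    (h : ∀ S : ℕ, ∃ᶠ n in atTop, Disjoint A (Icc (n + 1) (n + S))) :
    lowerBanachDensity A = 0 := by
  have h_inner (S : ℕ) :
      atTop.liminf (fun n : ℕ => ((A ∩ Icc (n + 1) (n + S)).ncard : ℝ) / S) = 0 :=
    liminf_eq_zero_of_nonneg_of_frequently_eq_zero (fun _ => by positivity)
      ((h S).mono fun n hn => by simp [hn.inter_eq])
  simp only [lowerBanachDensity, h_inner, liminf_const]

section Iterates

variable {𝕜 E : Type*} [NontriviallyNormedField 𝕜] [SeminormedAddCommGroup E] [NormedSpace 𝕜 E]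

namespace ContinuousLinearMap

lemma norm_pow_apply_le (T : E →L[𝕜] E) (r : ℕ) (y : E) :
    ‖(T ^ r) y‖ ≤ max 1 ‖T‖ ^ r * ‖y‖ := by
  induction r generalizing y with
  | zero => simp
  | succ r ih =>
    calc ‖(T ^ (r + 1)) y‖ = ‖(T ^ r) (T y)‖ := by rw [pow_succ]; rfl
      _ ≤ max 1 ‖T‖ ^ r * ‖T y‖ := ih _
      _ ≤ max 1 ‖T‖ ^ r * (‖T‖ * ‖y‖) := by gcongr; exact T.le_opNorm y
      _ ≤ max 1 ‖T‖ ^ r * (max 1 ‖T‖ * ‖y‖) := by gcongr; exact le_max_right _ _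
      _ = max 1 ‖T‖ ^ (r + 1) * ‖y‖ := by ring

lemma norm_pow_apply_le_of_le (T : E →L[𝕜] E) (x : E) {m n S : ℕ} (hmn : m ≤ n)
    (hnS : n ≤ m + S) : ‖(T ^ n) x‖ ≤ max 1 ‖T‖ ^ S * ‖(T ^ m) x‖ := by
  obtain ⟨r, rfl⟩ := Nat.exists_eq_add_of_le hmn
  calc ‖(T ^ (m + r)) x‖ = ‖(T ^ r) ((T ^ m) x)‖ := by rw [add_comm, pow_add]; rfl
    _ ≤ max 1 ‖T‖ ^ r * ‖(T ^ m) x‖ := norm_pow_apply_le T r _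
    _ ≤ max 1 ‖T‖ ^ S * ‖(T ^ m) x‖ := by gcongr; exacts [le_max_left _ _, by omega]

end ContinuousLinearMap

open ContinuousLinearMap

variable {ι : Type*} [Finite ι] (T : ι → E →L[𝕜] E) (x : E)

lemma frequently_forall_le_norm_pow_apply {l : ℕ → ℕ} (hl : Tendsto l atTop atTop)
    (hinf : ∀ j, Tendsto (fun k => ‖(T j ^ l k) x‖) atTop atTop) (σ : ℝ) (S : ℕ) :
    ∃ᶠ n in atTop, ∀ k ∈ Icc (n + 1) (n + S), ∀ j, σ ≤ ‖(T j ^ k) x‖ := by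
  have h_large : ∀ᶠ k in atTop, ∀ j, max 1 ‖T j‖ ^ S * σ ≤ ‖(T j ^ l k) x‖ :=
    eventually_all.2 fun j => (hinf j).eventually_ge_atTop _
  rw [frequently_atTop]
  intro n₀
  obtain ⟨k, hk, hk_far⟩ := (h_large.and (hl.eventually_ge_atTop (n₀ + S))).exists
  refine ⟨l k - S, by omega, fun i ⟨hi₁, hi₂⟩ j => ?_⟩
  have h_bound := norm_pow_apply_le_of_le (T j) x (n := l k) (m := i) (S := S) (by omega) (by omega)
  exact le_of_mul_le_mul_left (hk j |>.trans h_bound) (by positivity)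

lemma frequently_forall_norm_pow_apply_lt {s : ℕ → ℕ} (hs : Tendsto s atTop atTop)
    (hzero : ∀ j, Tendsto (fun k => (T j ^ s k) x) atTop (nhds 0)) {ε : ℝ} (hε : 0 < ε) (S : ℕ) :
    ∃ᶠ n in atTop, ∀ k ∈ Icc (n + 1) (n + S), ∀ j, ‖(T j ^ k) x‖ < ε := by
  have h_small : ∀ᶠ k in atTop, ∀ j, max 1 ‖T j‖ ^ S * ‖(T j ^ s k) x‖ < ε := by
    refine eventually_all.2 fun j => ?_
    have h_lim : Tendsto (fun k => max 1 ‖T j‖ ^ S * ‖(T j ^ s k) x‖) atTop (nhds 0) := by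
      simpa using ((hzero j).norm.const_mul (max 1 ‖T j‖ ^ S))
    exact h_lim.eventually (gt_mem_nhds hε)
  rw [frequently_atTop]
  intro n₀
  obtain ⟨k, hk, hk_far⟩ := (h_small.and (hs.eventually_ge_atTop n₀)).exists
  refine ⟨s k, hk_far, fun i ⟨hi₁, hi₂⟩ j => ?_⟩
  exact (norm_pow_apply_le_of_le (T j) x (m := s k) (S := S) (by omega) (by omega)).trans_lt (hk j)

end Iterates

theorem lower_banach_density_zero_of_liyorke_general {X : Type*} [NormedAddCommGroup X]
    [NormedSpace ℝ X]
    (N : ℕ) (T : Fin N → (X →L[ℝ] X)) (x : X)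
    (l s : ℕ → ℕ) (hl : StrictMono l) (hs : StrictMono s)
    (hzero : ∀ j, Tendsto (fun k => ((T j) ^ (s k)) x) atTop (nhds 0))
    (hinf : ∀ j, Tendsto (fun k => ‖((T j) ^ (l k)) x‖) atTop atTop) :
    ∀ σ ε : ℝ, 0 < σ → 0 < ε →
      (Filter.atTop.liminf (fun S : ℕ => Filter.atTop.liminf (fun n : ℕ =>
        (({k | (∃ j : Fin N, ‖((T j) ^ k) x‖ < σ) ∧ n + 1 ≤ k ∧ k ≤ n + S}).ncard : ℝ)
          / S)) = 0) ∧
      (Filter.atTop.liminf (fun S : ℕ => Filter.atTop.liminf (fun n : ℕ =>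
        (({k | (∃ j : Fin N, ε ≤ ‖((T j) ^ k) x‖) ∧ n + 1 ≤ k ∧ k ≤ n + S}).ncard : ℝ)
          / S)) = 0) := by
  intro σ ε _ hε
  refine ⟨?_, ?_⟩
  · change lowerBanachDensity {k | ∃ j, ‖(T j ^ k) x‖ < σ} = 0
    refine lowerBanachDensity_eq_zero_of_frequently_disjoint fun S => ?_
    refine (frequently_forall_le_norm_pow_apply T x hl.tendsto_atTop hinf σ S).mono ?_
    exact fun n hn => disjoint_right.2 fun k hk ⟨j, hj⟩ => (hn k hk j).not_gt hj
  · change lowerBanachDensity {k | ∃ j, ε ≤ ‖(T j ^ k) x‖} = 0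
    refine lowerBanachDensity_eq_zero_of_frequently_disjoint fun S => ?_
    refine (frequently_forall_norm_pow_apply_lt T x hs.tendsto_atTop hzero hε S).mono ?_
    exact fun n hn => disjoint_right.2 fun k hk ⟨j, hj⟩ => (hn k hk j).not_ge hj

/-- If `Tⱼ^{sₖ}x → 0` and `‖Tⱼ^{lₖ}x‖ → ∞` for every `j`, then for every `σ > 0` and
`ε > 0`, both `⋃ⱼ{k : ‖Tⱼᵏ x‖ < σ}` and `⋃ⱼ{k : ‖Tⱼᵏ x‖ ≥ ε}` have lower Banach
density zero. -/
theorem lower_banach_density_zero_of_liyorke {X : Type*} [NormedAddCommGroup X]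
    [NormedSpace ℝ X] [CompleteSpace X]
    (N : ℕ) (hN : 0 < N) (T : Fin N → (X →L[ℝ] X)) (x : X)
    (l s : ℕ → ℕ) (hl : StrictMono l) (hs : StrictMono s)
    (hl1 : ∀ k, 1 ≤ l k) (hs1 : ∀ k, 1 ≤ s k)
    (hzero : ∀ j, Tendsto (fun k => ((T j) ^ (s k)) x) atTop (nhds 0))
    (hinf : ∀ j, Tendsto (fun k => ‖((T j) ^ (l k)) x‖) atTop atTop) :
    ∀ σ ε : ℝ, 0 < σ → 0 < ε →
      (Filter.atTop.liminf (fun S : ℕ => Filter.atTop.liminf (fun n : ℕ =>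
        (({k | (∃ j : Fin N, ‖((T j) ^ k) x‖ < σ) ∧ n + 1 ≤ k ∧ k ≤ n + S}).ncard : ℝ)
          / S)) = 0) ∧
      (Filter.atTop.liminf (fun S : ℕ => Filter.atTop.liminf (fun n : ℕ =>
        (({k | (∃ j : Fin N, ε ≤ ‖((T j) ^ k) x‖) ∧ n + 1 ≤ k ∧ k ≤ n + S}).ncard : ℝ)
          / S)) = 0) :=
  lower_banach_density_zero_of_liyorke_general N T x l s hl hs hzero hinf
end
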